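/- arXiv:2312.16267 — 2 statements merged into one kernel-verified Lean document; each statement's English description precedes it below -/
import Mathlib

section
/- Consider ψ ∈ [0,1] and define μ(ψ) = ψ·(−5) + (1−ψ)·(−1) = −4ψ − 1 and σ²(ψ) = 8ψ² + (1−ψ)², and let C(ψ) = P(Z > 0) where Z ~ N(μ(ψ), σ²(ψ)), i.e. C(ψ) = 1 − Φ(−μ(ψ)/σ(ψ)) = 1 − Φ((4ψ+1)/√(8ψ²+(1−ψ)²)). Then C is not concave on [0,1]. -/
open MeasureTheory ProbabilityTheory Set

/-- Standard normal CDF. -/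
noncomputable def stdNormalCDF (x : ℝ) : ℝ := ((gaussianReal 0 1) (Iic x)).toReal

lemma stdNormalCDF_strictMono : StrictMono stdNormalCDF := by
  intro a b hab
  have hac : (volume : Measure ℝ) ≪ gaussianReal 0 1 :=
    gaussianReal_absolutelyContinuous' 0 one_ne_zero
  have hpos : (gaussianReal 0 1) (Ioc a b) ≠ 0 := by
    intro h
    have := hac h
    rw [Real.volume_Ioc] at this
    simp [ENNReal.ofReal_eq_zero, sub_nonpos, not_le.mpr hab] at this
  have hunion : Iic a ∪ Ioc a b = Iic b := Set.Iic_union_Ioc_eq_Iic hab.le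
  have hdisj : Disjoint (Iic a) (Ioc a b) := by
    rw [Set.disjoint_left]
    rintro x hx ⟨h1, _⟩
    exact absurd hx (not_le.mpr h1)
  have hmeas : (gaussianReal 0 1) (Iic b) =
      (gaussianReal 0 1) (Iic a) + (gaussianReal 0 1) (Ioc a b) := by
    rw [← hunion, measure_union hdisj measurableSet_Ioc]
  unfold stdNormalCDF
  rw [hmeas, ENNReal.toReal_add (measure_ne_top _ _) (measure_ne_top _ _)]
  have : 0 < ((gaussianReal 0 1) (Ioc a b)).toReal :=
    ENNReal.toReal_pos hpos (measure_ne_top _ _)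
  linarith

/-- Non-concavity of the success probability criterion: with `μ(ψ) = −4ψ − 1` and
`σ²(ψ) = 8ψ² + (1−ψ)²`, the criterion
`C(ψ) = P(N(μ(ψ), σ²(ψ)) > 0) = 1 − Φ((4ψ+1)/√(8ψ²+(1−ψ)²))` is not concave on `[0,1]`. -/
theorem stmt12 :
    ¬ ConcaveOn ℝ (Icc (0 : ℝ) 1)
      (fun ψ => 1 - stdNormalCDF ((4 * ψ + 1) / Real.sqrt (8 * ψ ^ 2 + (1 - ψ) ^ 2))) := by
  intro h
  have h0 : (0:ℝ) ∈ Icc (0:ℝ) 1 := by constructor <;> norm_num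
  have h1 : (1:ℝ) ∈ Icc (0:ℝ) 1 := by constructor <;> norm_num
  have key := h.2 h0 h1 (by norm_num : (0:ℝ) ≤ 1/2) (by norm_num : (0:ℝ) ≤ 1/2) (by norm_num)
  simp only [smul_eq_mul] at key
  have e0 : (4 * (0:ℝ) + 1) / Real.sqrt (8 * (0:ℝ) ^ 2 + (1 - 0) ^ 2) = 1 := by
    norm_num
  have e1 : (4 * (1:ℝ) + 1) / Real.sqrt (8 * (1:ℝ) ^ 2 + (1 - 1) ^ 2) = 5 / Real.sqrt 8 := by
    norm_num
  have emid : (4 * ((1:ℝ)/2 * 0 + 1/2 * 1) + 1) /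
      Real.sqrt (8 * ((1:ℝ)/2 * 0 + 1/2 * 1) ^ 2 + (1 - ((1:ℝ)/2 * 0 + 1/2 * 1)) ^ 2) = 2 := by
    have : (8 * ((1:ℝ)/2 * 0 + 1/2 * 1) ^ 2 + (1 - ((1:ℝ)/2 * 0 + 1/2 * 1)) ^ 2) = (3/2)^2 := by
      norm_num
    rw [this, Real.sqrt_sq (by norm_num)]
    norm_num
  rw [e0, e1] at key
  rw [show ((1:ℝ)/2 * 0 + 1/2 * 1) = 1/2 by norm_num] at key
  have emid' : (4 * ((1:ℝ)/2) + 1) / Real.sqrt (8 * ((1:ℝ)/2) ^ 2 + (1 - (1:ℝ)/2) ^ 2) = 2 := by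
    have : (8 * ((1:ℝ)/2) ^ 2 + (1 - (1:ℝ)/2) ^ 2) = (3/2:ℝ)^2 := by norm_num
    rw [this, Real.sqrt_sq (by norm_num)]
    norm_num
  rw [emid'] at key
  -- key : 1 - Φ 2 ≥ 1/2 * (1 - Φ 1) + 1/2 * (1 - Φ (5/√8))
  have m1 : stdNormalCDF 1 < stdNormalCDF 2 := stdNormalCDF_strictMono (by norm_num)
  have hlt : (5:ℝ) / Real.sqrt 8 < 2 := by
    rw [div_lt_iff₀ (Real.sqrt_pos.mpr (by norm_num))]
    nlinarith [Real.sq_sqrt (by norm_num : (8:ℝ) ≥ 0), Real.sqrt_nonneg (8:ℝ)]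
  have m2 : stdNormalCDF (5 / Real.sqrt 8) < stdNormalCDF 2 := stdNormalCDF_strictMono hlt
  linarith
end

section
/- Let C ⊆ ℝⁿ be the probability simplex Δ = {x : x_i ≥ 0, Σ x_i = 1} and let y ∈ ℝⁿ. Then the Euclidean projection of y onto Δ exists, is unique, and has the form (proj_Δ y)_i = max(y_i − θ, 0) for some θ ∈ ℝ satisfying Σ_i max(y_i − θ, 0) = 1. -/
/-!
The map `θ ↦ Σᵢ max (yᵢ - θ) 0` is continuous, `≥ 1` for small `θ` and `0` for large `θ`, so by the
intermediate value theorem some `θ` makes `p = (max (yᵢ - θ) 0)ᵢ` a point of the simplex.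
For any `q` in the simplex, `(yᵢ - pᵢ)(qᵢ - pᵢ) ≤ θ (qᵢ - pᵢ)` coordinatewise (equality where
`pᵢ > 0`, and `yᵢ ≤ θ`, `qᵢ ≥ 0` where `pᵢ = 0`), and summing gives `⟪y - p, q - p⟫ ≤ 0` because
`Σ qᵢ = Σ pᵢ`. This variational inequality yields `‖y - p‖² + ‖q - p‖² ≤ ‖y - q‖²`, which is both
minimality and uniqueness of `p`.
-/

open Finset

section InnerProductSpace

variable {E : Type*} [NormedAddCommGroup E] [InnerProductSpace ℝ E] {y p q : E}

theorem norm_sub_sq_add_norm_sub_sq_le_of_inner_le_zero (h : inner ℝ (y - p) (q - p) ≤ 0) :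
    ‖y - p‖ ^ 2 + ‖q - p‖ ^ 2 ≤ ‖y - q‖ ^ 2 := by
  rw [show y - q = (y - p) - (q - p) by abel, norm_sub_sq_real (y - p)]
  linarith

theorem norm_sub_le_of_inner_le_zero (h : inner ℝ (y - p) (q - p) ≤ 0) :
    ‖y - p‖ ≤ ‖y - q‖ := by
  have := norm_sub_sq_add_norm_sub_sq_le_of_inner_le_zero h
  exact le_of_sq_le_sq (by nlinarith [sq_nonneg ‖q - p‖]) (norm_nonneg _)

theorem eq_of_inner_le_zero_of_norm_sub_le (h : inner ℝ (y - p) (q - p) ≤ 0)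
    (hq : ‖y - q‖ ≤ ‖y - p‖) : q = p := by
  have := norm_sub_sq_add_norm_sub_sq_le_of_inner_le_zero h
  have : ‖q - p‖ ^ 2 ≤ 0 := by nlinarith [norm_nonneg (y - q), norm_nonneg (y - p)]
  rw [← sub_eq_zero, ← norm_eq_zero]
  exact pow_eq_zero_iff two_ne_zero |>.mp (le_antisymm this (sq_nonneg _))

end InnerProductSpace

section SoftThreshold

variable {ι : Type*}

noncomputable def softThreshold (y : EuclideanSpace ℝ ι) (θ : ℝ) : EuclideanSpace ℝ ι :=
  WithLp.toLp 2 fun i => max (y i - θ) 0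

@[simp]
theorem softThreshold_apply (y : EuclideanSpace ℝ ι) (θ : ℝ) (i : ι) :
    softThreshold y θ i = max (y i - θ) 0 :=
  rfl

variable [Fintype ι]

theorem continuous_sum_max_sub (y : ι → ℝ) : Continuous fun θ => ∑ i, max (y i - θ) 0 := by
  fun_prop

theorem exists_sum_max_sub_eq [Nonempty ι] (y : ι → ℝ) {s : ℝ} (hs : 0 ≤ s) :
    ∃ θ, ∑ i, max (y i - θ) 0 = s := by
  obtain ⟨i₀⟩ := ‹Nonempty ι›
  set a := univ.inf' univ_nonempty y
  set b := univ.sup' univ_nonempty y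
  have hab : a - s ≤ b := by
    have : a ≤ b := (inf'_le y (mem_univ i₀)).trans (le_sup' y (mem_univ i₀))
    linarith
  have hs_le : s ≤ ∑ i, max (y i - (a - s)) 0 :=
    calc s ≤ max (y i₀ - (a - s)) 0 := by
          have : a ≤ y i₀ := inf'_le y (mem_univ i₀)
          exact le_max_of_le_left (by linarith)
      _ ≤ ∑ i, max (y i - (a - s)) 0 :=
          single_le_sum (f := fun i => max (y i - (a - s)) 0) (fun i _ => le_max_right _ _) (mem_univ i₀)
  have hb_zero : ∑ i, max (y i - b) 0 = 0 :=
    sum_eq_zero fun i _ => max_eq_right (sub_nonpos.mpr (le_sup' y (mem_univ i)))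
  obtain ⟨θ, -, hθ⟩ := intermediate_value_Icc' hab (continuous_sum_max_sub y).continuousOn
    ⟨hb_zero.symm ▸ hs, hs_le⟩
  exact ⟨θ, hθ⟩

theorem inner_sub_softThreshold_le_zero (y : EuclideanSpace ℝ ι) (θ : ℝ)
    {q : EuclideanSpace ℝ ι} (hq : ∀ i, 0 ≤ q i)
    (hsum : ∑ i, q i = ∑ i, softThreshold y θ i) :
    inner ℝ (y - softThreshold y θ) (q - softThreshold y θ) ≤ 0 := by
  set p := softThreshold y θ
  have hterm : ∀ i, (y i - p i) * (q i - p i) ≤ θ * (q i - p i) := by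
    intro i
    rcases le_or_gt (y i - θ) 0 with h | h
    · have hpi : p i = 0 := max_eq_right h
      rw [hpi]
      nlinarith [hq i]
    · have hpi : p i = y i - θ := max_eq_left h.le
      rw [hpi, sub_sub_cancel]
  calc inner ℝ (y - p) (q - p) = ∑ i, (y i - p i) * (q i - p i) := by
        simp [PiLp.inner_apply, mul_comm]
    _ ≤ ∑ i, θ * (q i - p i) := sum_le_sum fun i _ => hterm i
    _ = 0 := by rw [← mul_sum, sum_sub_distrib, hsum, sub_self, mul_zero]

end SoftThreshold

/-- Euclidean projection onto the probability simplex `Δ = {x : xᵢ ≥ 0, Σ xᵢ = 1}`: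
the projection of any `y` exists, is unique, and has the soft-thresholding form
`(proj_Δ y)ᵢ = max(yᵢ − θ, 0)` for some `θ` with `Σᵢ max(yᵢ − θ, 0) = 1`. -/
theorem stmt18 (n : ℕ) (hn : 0 < n) (y : EuclideanSpace ℝ (Fin n)) :
    ∃ p : EuclideanSpace ℝ (Fin n),
      ((∀ i, 0 ≤ p i) ∧ ∑ i, p i = 1)
      ∧ (∀ q : EuclideanSpace ℝ (Fin n),
          ((∀ i, 0 ≤ q i) ∧ ∑ i, q i = 1) → ‖y - p‖ ≤ ‖y - q‖)
      ∧ (∀ p' : EuclideanSpace ℝ (Fin n),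
          ((∀ i, 0 ≤ p' i) ∧ ∑ i, p' i = 1) →
          (∀ q : EuclideanSpace ℝ (Fin n),
            ((∀ i, 0 ≤ q i) ∧ ∑ i, q i = 1) → ‖y - p'‖ ≤ ‖y - q‖) → p' = p)
      ∧ ∃ θ : ℝ, (∀ i, p i = max (y i - θ) 0) ∧ ∑ i, max (y i - θ) 0 = 1 := by
  have : Nonempty (Fin n) := Fin.pos_iff_nonempty.mp hn
  obtain ⟨θ, hθ⟩ := exists_sum_max_sub_eq y zero_le_one
  set p := softThreshold y θ
  have hp : (∀ i, 0 ≤ p i) ∧ ∑ i, p i = 1 := ⟨fun i => le_max_right _ _, hθ⟩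
  have hvar : ∀ q : EuclideanSpace ℝ (Fin n), ((∀ i, 0 ≤ q i) ∧ ∑ i, q i = 1) →
      inner ℝ (y - p) (q - p) ≤ 0 := fun q ⟨hq, hqsum⟩ =>
    inner_sub_softThreshold_le_zero y θ hq (hqsum.trans hp.2.symm)
  refine ⟨p, hp, fun q hq => norm_sub_le_of_inner_le_zero (hvar q hq), ?_, θ, fun _ => rfl, hθ⟩
  intro p' hp' hp'_min
  exact eq_of_inner_le_zero_of_norm_sub_le (hvar p' hp') (hp'_min p hp)
end
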